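/- Let Δ ∈ ℝ^{n×n} be symmetric with GWM A = nΔ, and let h : ℝ → ℝ be continuous with h(0) = 0. Then h(T_{W_A}) = T_{W_{n·h(Δ)}} as bounded operators on L²[0,1], where h(Δ) is the matrix functional calculus of h at Δ and n·h(Δ) is its associated GWM. -/

import Mathlib

open MeasureTheory Filter

noncomputable section

/-- Lebesgue measure restricted to `[0,1]`. -/
abbrev μ01 : Measure ℝ := volume.restrict (Set.Icc 0 1)

instance : IsFiniteMeasure μ01 := by
  constructor
  rw [Measure.restrict_apply_univ, Real.volume_Icc]
  exact ENNReal.ofReal_lt_top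

/-- The space `L²[0,1]` (complex valued). -/
abbrev L2 := Lp ℂ 2 μ01

instance : ContinuousFunctionalCalculus ℝ (L2 →L[ℂ] L2) IsSelfAdjoint :=
  IsSelfAdjoint.instContinuousFunctionalCalculus

/-- The `j`-th interval `P_j = [j/n, (j+1)/n)` of the standard partition of `[0,1]`
(0-indexed version of `[(j-1)/n, j/n)`). -/
def part (n : ℕ) (j : Fin n) : Set ℝ := Set.Ico ((j : ℝ) / n) (((j : ℝ) + 1) / n)

lemma part_meas (n : ℕ) (j : Fin n) : MeasurableSet (part n j) := measurableSet_Ico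

lemma part_ne_top (n : ℕ) (j : Fin n) : μ01 (part n j) ≠ ⊤ := (measure_lt_top _ _).ne

/-- The graphon `W_B` induced by an `n × n` matrix `B`:
`W_B(u,v) = ∑_{i,j} B i j · 1_{P_i}(u) · 1_{P_j}(v)`. -/
def inducedGraphon {n : ℕ} (B : Matrix (Fin n) (Fin n) ℝ) : ℝ → ℝ → ℝ :=
  fun u v => ∑ i, ∑ j, B i j * (part n i).indicator 1 u * (part n j).indicator 1 v

/-- The graphon signal `ψ_x = ∑_j x_j · 1_{P_j} ∈ L²[0,1]` induced by `x ∈ ℂⁿ`. -/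
def inducedSignal {n : ℕ} (x : Fin n → ℂ) : L2 :=
  ∑ j, indicatorConstLp 2 (part_meas n j) (part_ne_top n j) (x j)

/-- `W` is a graphon: bounded, symmetric and measurable `[0,1]² → ℝ`
(realized as a function on all of `ℝ²`; only its values matter w.r.t. `μ01`). -/
structure IsGraphon (W : ℝ → ℝ → ℝ) : Prop where
  symm : ∀ u v, W u v = W v u
  meas : Measurable (Function.uncurry W)
  bdd : ∃ C, ∀ u v, |W u v| ≤ C

/-- `T` is the graphon shift operator of `W`: `(T f)(v) = ∫₀¹ W(v,u) f(u) du`. -/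
def IsGRSO (W : ℝ → ℝ → ℝ) (T : L2 →L[ℂ] L2) : Prop :=
  ∀ f : L2, ∀ᵐ v ∂μ01, T f v = ∫ u, (W v u : ℂ) * f u ∂μ01

/-- Entrywise complexification of a real activation function. -/
def rhoC (ρ : ℝ → ℝ) (z : ℂ) : ℂ := (ρ z.re : ℂ) + (ρ z.im : ℂ) * Complex.I

/-- The realization of an SCNN (filters `filt`, weights `wt`, activation `ρ`) on a graph with
GSO `Δ`: `graphNet F filt wt ρ Δ x l j` is the `j`-th feature of the `l`-th layer, on input
feature map `x`.  Layer `l+1` is obtained from layer `l` via the filters `filt l j k`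
and weights `wt l j k`. -/
def graphNet (F : ℕ → ℕ) (filt : ℕ → ℕ → ℕ → ℝ → ℝ) (wt : ℕ → ℕ → ℕ → ℝ)
    (ρ : ℝ → ℝ) {n : ℕ} (Δ : Matrix (Fin n) (Fin n) ℝ) (x : ℕ → Fin n → ℂ) :
    ℕ → ℕ → Fin n → ℂ
  | 0, j => x j
  | (l + 1), j => fun v =>
      rhoC ρ (∑ k ∈ Finset.range (F l),
        (wt l j k : ℂ) * (((cfc (filt l j k) Δ).map Complex.ofReal).mulVec
          (graphNet F filt wt ρ Δ x l k)) v)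

/-- `y` is a realization of the SCNN (filters `filt`, weights `wt`, activation `ρ`,
`Lnum` layers, feature dimensions `F`) on the graphon shift operator `T`:
`y l j` is the `j`-th feature of the `l`-th layer, and each layer is obtained from the
previous one by filtering with `cfc (filt l j k) T`, taking weighted sums, and applying
the activation pointwise almost everywhere. -/
def IsGraphonNet (Lnum : ℕ) (F : ℕ → ℕ) (filt : ℕ → ℕ → ℕ → ℝ → ℝ) (wt : ℕ → ℕ → ℕ → ℝ)
    (ρ : ℝ → ℝ) (T : L2 →L[ℂ] L2) (y : ℕ → ℕ → L2) : Prop :=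
  ∀ l < Lnum, ∀ j < F (l + 1),
    ⇑(y (l + 1) j) =ᵐ[μ01]
      fun v => rhoC ρ
        (((∑ k ∈ Finset.range (F l),
          (wt l j k : ℂ) • (cfc (filt l j k) T) (y l k) : L2) : ℝ → ℂ) v)

/-!
The functions `e_j = √n · 1_{P_j}` form an orthonormal family in `L²[0,1]`, and the kernel of
`W_{nB}` is `∑ B_ij e_i(v) e_j(u)`, so `T_{W_{nB}} = ∑ B_ij |e_i⟩⟨e_j|`. The map
`B ↦ ∑ B_ij |e_i⟩⟨e_j|` is a continuous star homomorphism from real matrices to operators, but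
not a unital one (it sends `1` to the projection onto `span e`), so it intertwines only the
non-unital functional calculus; `h 0 = 0` identifies `cfcₙ h` with `cfc h` on both sides.
-/

open scoped ComplexInnerProductSpace
open InnerProductSpace Function

namespace Orthonormal

variable {ι E : Type*} [Fintype ι] [NormedAddCommGroup E] [InnerProductSpace ℂ E]
  [CompleteSpace E] {v : ι → E}

def matrixStarHom (hv : Orthonormal ℂ v) : Matrix ι ι ℝ →⋆ₙₐ[ℝ] (E →L[ℂ] E) where
  toFun B := ∑ i, ∑ j, (B i j : ℂ) • rankOne ℂ (v i) (v j)
  map_smul' r B := by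
    simp only [Finset.smul_sum, Matrix.smul_apply, smul_eq_mul, Complex.ofReal_mul, mul_smul,
      RCLike.real_smul_eq_coe_smul (K := ℂ)]
    rfl
  map_zero' := by simp
  map_add' B C := by simp [add_smul, Finset.sum_add_distrib]
  map_mul' B C := by
    classical
    simp only [Finset.sum_mul, Finset.mul_sum, smul_mul_smul, ContinuousLinearMap.mul_def,
      rankOne_comp_rankOne, orthonormal_iff_ite.mp hv, smul_ite, smul_zero, ite_smul, one_smul,
      zero_smul, Finset.sum_ite_eq', Finset.mem_univ, if_true, Matrix.mul_apply,
      Complex.ofReal_sum, Complex.ofReal_mul, Finset.sum_smul, mul_smul]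
    conv_rhs => rw [Finset.sum_comm]
    rw [Finset.sum_comm]
    exact Finset.sum_congr rfl fun _ _ => Finset.sum_comm
  map_star' B := by
    simp only [star_sum, star_smul, ContinuousLinearMap.star_eq_adjoint, adjoint_rankOne,
      Matrix.star_apply]
    rw [Finset.sum_comm]
    simp

lemma matrixStarHom_apply (hv : Orthonormal ℂ v) (B : Matrix ι ι ℝ) (f : E) :
    hv.matrixStarHom B f = ∑ i, (∑ j, (B i j : ℂ) * ⟪v j, f⟫) • v i := by
  simp [matrixStarHom, Finset.sum_smul, mul_smul]

theorem cfc_matrixStarHom [DecidableEq ι] (hv : Orthonormal ℂ v) {B : Matrix ι ι ℝ}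
    (hB : IsSelfAdjoint B) {h : ℝ → ℝ} (hh : Continuous h) (h0 : h 0 = 0) :
    cfc h (hv.matrixStarHom B) = hv.matrixStarHom (cfc h B) := by
  have hcont : Continuous hv.matrixStarHom :=
    LinearMap.continuous_of_finiteDimensional (hv.matrixStarHom : Matrix ι ι ℝ →ₗ[ℝ] E →L[ℂ] E)
  rw [← cfcₙ_eq_cfc hh.continuousOn h0, ← cfcₙ_eq_cfc hh.continuousOn h0,
    hv.matrixStarHom.map_cfcₙ h B hh.continuousOn h0 hcont hB (hB.map _)]

end Orthonormal

lemma part_subset_Icc {n : ℕ} (j : Fin n) : part n j ⊆ Set.Icc 0 1 := by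
  rintro x ⟨hjx, hxj⟩
  have hn : (0 : ℝ) < n := by exact_mod_cast j.pos
  refine ⟨le_trans (by positivity) hjx, hxj.le.trans ?_⟩
  rw [div_le_one hn]
  exact_mod_cast j.is_lt

lemma measureReal_part {n : ℕ} (j : Fin n) : μ01.real (part n j) = (n : ℝ)⁻¹ := by
  have hn : (0 : ℝ) < n := by exact_mod_cast j.pos
  rw [measureReal_def, Measure.restrict_apply (part_meas n j),
    Set.inter_eq_left.mpr (part_subset_Icc j), part, Real.volume_Ico, ENNReal.toReal_ofReal]
  · field_simp
    ring
  · rw [sub_nonneg]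
    gcongr
    linarith

lemma pairwise_disjoint_part (n : ℕ) : Pairwise (Disjoint on part n) := by
  intro j k hjk
  rw [onFun, Set.disjoint_left]
  rintro x ⟨hjx, hxj⟩ ⟨hkx, hxk⟩
  have hn : (0 : ℝ) < n := by exact_mod_cast j.pos
  have hjk' : (j : ℕ) < k + 1 := by
    have : (j : ℝ) / n < (k + 1) / n := by linarith
    exact_mod_cast (div_lt_div_iff_of_pos_right hn).mp this
  have hkj' : (k : ℕ) < j + 1 := by
    have : (k : ℝ) / n < (j + 1) / n := by linarith
    exact_mod_cast (div_lt_div_iff_of_pos_right hn).mp this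
  exact hjk (Fin.ext (by omega))

def normalizedIndicator (n : ℕ) (j : Fin n) : L2 :=
  indicatorConstLp 2 (part_meas n j) (part_ne_top n j) (√n : ℂ)

lemma orthonormal_normalizedIndicator (n : ℕ) : Orthonormal ℂ (normalizedIndicator n) := by
  rw [orthonormal_iff_ite]
  intro j k
  rw [normalizedIndicator, normalizedIndicator, L2.inner_indicatorConstLp_indicatorConstLp]
  split_ifs with hjk
  · subst hjk
    rw [Set.inter_self, measureReal_part, Complex.real_smul]
    simp [← Complex.ofReal_pow, Real.sq_sqrt (Nat.cast_nonneg n), j.pos.ne']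
  · rw [Set.disjoint_iff_inter_eq_empty.mp (pairwise_disjoint_part n hjk), measureReal_empty,
      zero_smul]

lemma coeFn_normalizedIndicator {n : ℕ} (j : Fin n) :
    ⇑(normalizedIndicator n j) =ᵐ[μ01] (part n j).indicator fun _ => (√n : ℂ) :=
  indicatorConstLp_coeFn

lemma inner_normalizedIndicator {n : ℕ} (j : Fin n) (f : L2) :
    ⟪normalizedIndicator n j, f⟫ = ∫ u, (part n j).indicator (fun u => (√n : ℂ) * f u) u ∂μ01 := by
  rw [normalizedIndicator, L2.inner_indicatorConstLp_eq_setIntegral_inner,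
    integral_indicator (part_meas n j)]
  simp [mul_comm]

lemma ofReal_inducedGraphon_smul_mul (n : ℕ) (B : Matrix (Fin n) (Fin n) ℝ) (f : L2) (v u : ℝ) :
    (inducedGraphon ((n : ℝ) • B) v u : ℂ) * f u =
      ∑ i, ∑ j, ((B i j : ℂ) * (part n i).indicator (fun _ => (√n : ℂ)) v) *
        (part n j).indicator (fun u => (√n : ℂ) * f u) u := by
  simp only [inducedGraphon, Matrix.smul_apply, smul_eq_mul, Complex.ofReal_sum, Finset.sum_mul]
  refine Finset.sum_congr rfl fun i _ => Finset.sum_congr rfl fun j _ => ?_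
  have hsq : (n : ℂ) = √n * √n := by
    rw [← Complex.ofReal_mul, Real.mul_self_sqrt (Nat.cast_nonneg n), Complex.ofReal_natCast]
  by_cases hi : v ∈ part n i <;> by_cases hj : u ∈ part n j <;>
    simp only [hi, hj, Set.indicator_of_mem, Set.indicator_of_notMem, not_false_eq_true,
      Pi.one_apply, Complex.ofReal_zero, Complex.ofReal_mul, Complex.ofReal_natCast, mul_one,
      mul_zero, zero_mul]
  linear_combination (B i j : ℂ) * f u * hsq

lemma integral_inducedGraphon_smul_mul (n : ℕ) (B : Matrix (Fin n) (Fin n) ℝ) (f : L2) (v : ℝ) :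
    ∫ u, (inducedGraphon ((n : ℝ) • B) v u : ℂ) * f u ∂μ01 =
      ∑ i, (∑ j, (B i j : ℂ) * ⟪normalizedIndicator n j, f⟫) *
        (part n i).indicator (fun _ => (√n : ℂ)) v := by
  have hint (j : Fin n) :
      Integrable (fun u => (part n j).indicator (fun u => (√n : ℂ) * f u) u) μ01 :=
    (((Lp.memLp f).integrable one_le_two).const_mul _).indicator (part_meas n j)
  simp_rw [ofReal_inducedGraphon_smul_mul, inner_normalizedIndicator]
  rw [integral_finsetSum _ fun i _ => integrable_finsetSum _ fun j _ => (hint j).const_mul _]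
  refine Finset.sum_congr rfl fun i _ => ?_
  rw [integral_finsetSum _ fun j _ => (hint j).const_mul _, Finset.sum_mul]
  refine Finset.sum_congr rfl fun j _ => ?_
  rw [integral_const_mul]
  ring

lemma coeFn_matrixStarHom_normalizedIndicator (n : ℕ) (B : Matrix (Fin n) (Fin n) ℝ) (f : L2) :
    ⇑((orthonormal_normalizedIndicator n).matrixStarHom B f) =ᵐ[μ01] fun v =>
      ∑ i, (∑ j, (B i j : ℂ) * ⟪normalizedIndicator n j, f⟫) *
        (part n i).indicator (fun _ => (√n : ℂ)) v := by
  have hsmul (i : Fin n) (c : ℂ) : ⇑(c • normalizedIndicator n i) =ᵐ[μ01]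
      fun v => c * (part n i).indicator (fun _ => (√n : ℂ)) v := by
    filter_upwards [Lp.coeFn_smul c (normalizedIndicator n i), coeFn_normalizedIndicator i]
      with v hc hind
    rw [hc, Pi.smul_apply, hind, smul_eq_mul]
  rw [Orthonormal.matrixStarHom_apply]
  refine (Lp.coeFn_fun_finsetSum _ _).trans ?_
  filter_upwards [ae_all_iff.mpr fun i => hsmul i _] with v hi
  exact Finset.sum_congr rfl fun i _ => hi i

theorem isGRSO_matrixStarHom_normalizedIndicator (n : ℕ) (B : Matrix (Fin n) (Fin n) ℝ) :
    IsGRSO (inducedGraphon ((n : ℝ) • B)) ((orthonormal_normalizedIndicator n).matrixStarHom B) :=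
  fun f => (coeFn_matrixStarHom_normalizedIndicator n B f).mono fun v hv => by
    rw [hv, integral_inducedGraphon_smul_mul]

theorem IsGRSO.unique {W : ℝ → ℝ → ℝ} {T₁ T₂ : L2 →L[ℂ] L2} (h₁ : IsGRSO W T₁)
    (h₂ : IsGRSO W T₂) : T₁ = T₂ :=
  ContinuousLinearMap.ext fun f => Lp.ext <| by
    filter_upwards [h₁ f, h₂ f] with v hv₁ hv₂ using hv₁.trans hv₂.symm

/-- For symmetric `Δ` with GWM `A = nΔ` and continuous `h : ℝ → ℝ` with
`h(0) = 0`, one has `h(T_{W_A}) = T_{W_{n·h(Δ)}}` as bounded operators on `L²[0,1]`. -/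
theorem statement2 (n : ℕ) (Δ : Matrix (Fin n) (Fin n) ℝ) (hΔ : Δ.IsSymm)
    (h : ℝ → ℝ) (hh : Continuous h) (h0 : h 0 = 0)
    (T T' : L2 →L[ℂ] L2)
    (hT : IsGRSO (inducedGraphon ((n : ℝ) • Δ)) T)
    (hT' : IsGRSO (inducedGraphon ((n : ℝ) • cfc h Δ)) T') :
    cfc h T = T' := by
  rw [hT.unique (isGRSO_matrixStarHom_normalizedIndicator n Δ),
    hT'.unique (isGRSO_matrixStarHom_normalizedIndicator n (cfc h Δ))]
  exact (orthonormal_normalizedIndicator n).cfc_matrixStarHom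
    (Matrix.isHermitian_iff_isSymm.mpr hΔ).isSelfAdjoint hh h0
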